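/- If the operator-norm difference of state transition operators is bounded by a Lipschitz condition ‖P* − P‖ ≤ L·κ, and the visitation measures are ρ* = (∑_{t≥0} γ^t (P*)^t)δ and ρ = (∑_{t≥0} γ^t P^t)δ with ‖δ‖ ≤ 1, then ‖ρ* − ρ‖ ≤ (γL/(1−γ)²)·κ. -/

import Mathlib

/-!
Since `a ^ (n + 1) - b ^ (n + 1) = a * (a ^ n - b ^ n) + (a - b) * b ^ n`, contractions satisfy
`‖a ^ n - b ^ n‖ ≤ n * ‖a - b‖`. Summing this against the discount weights `γ ^ n` gives the
factor `∑ₙ n * γ ^ n = γ / (1 - γ) ^ 2`.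
-/

section SeminormedRing

variable {R : Type*} [SeminormedRing R]

theorem norm_mul_pow_le_of_norm_le_one (x : R) {b : R} (hb : ‖b‖ ≤ 1) (n : ℕ) :
    ‖x * b ^ n‖ ≤ ‖x‖ := by
  induction n with
  | zero => simp
  | succ n ih =>
    calc ‖x * b ^ (n + 1)‖ = ‖x * b ^ n * b‖ := by rw [pow_succ, mul_assoc]
      _ ≤ ‖x * b ^ n‖ * ‖b‖ := norm_mul_le _ _
      _ ≤ ‖x‖ * 1 := mul_le_mul ih hb (norm_nonneg _) (norm_nonneg _)
      _ = ‖x‖ := mul_one _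

theorem norm_pow_sub_pow_le_of_norm_le_one {a b : R} (ha : ‖a‖ ≤ 1) (hb : ‖b‖ ≤ 1) (n : ℕ) :
    ‖a ^ n - b ^ n‖ ≤ n * ‖a - b‖ := by
  induction n with
  | zero => simp
  | succ n ih =>
    have telescope : a ^ (n + 1) - b ^ (n + 1) = a * (a ^ n - b ^ n) + (a - b) * b ^ n := by
      simp only [pow_succ', mul_sub, sub_mul]
      abel
    calc ‖a ^ (n + 1) - b ^ (n + 1)‖
        ≤ ‖a‖ * ‖a ^ n - b ^ n‖ + ‖(a - b) * b ^ n‖ := by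
          rw [telescope]
          exact (norm_add_le _ _).trans (add_le_add_left (norm_mul_le _ _) _)
      _ ≤ 1 * (n * ‖a - b‖) + ‖a - b‖ :=
          add_le_add (mul_le_mul ha ih (norm_nonneg _) zero_le_one)
            (norm_mul_pow_le_of_norm_le_one _ hb n)
      _ = (n + 1 : ℕ) * ‖a - b‖ := by push_cast; ring

end SeminormedRing

namespace ContinuousLinearMap

variable {X : Type*} [NormedAddCommGroup X] [NormedSpace ℝ X]

theorem norm_pow_apply_le_of_norm_le_one {Q : X →L[ℝ] X} (hQ : ‖Q‖ ≤ 1) (n : ℕ) (v : X) :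
    ‖(Q ^ n) v‖ ≤ ‖v‖ := by
  induction n with
  | zero => simp
  | succ n ih =>
    rw [pow_succ', mul_apply_eq_comp]
    exact (Q.le_of_opNorm_le hQ _).trans (by rwa [one_mul])

theorem summable_geometric_smul_pow_apply [CompleteSpace X] {Q : X →L[ℝ] X} (hQ : ‖Q‖ ≤ 1)
    {γ : ℝ} (hγ0 : 0 ≤ γ) (hγ1 : γ < 1) (v : X) :
    Summable fun n : ℕ => γ ^ n • (Q ^ n) v := by
  refine Summable.of_norm_bounded ((summable_geometric_of_lt_one hγ0 hγ1).mul_right ‖v‖)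
    fun n => ?_
  rw [norm_smul, Real.norm_of_nonneg (pow_nonneg hγ0 n)]
  exact mul_le_mul_of_nonneg_left (norm_pow_apply_le_of_norm_le_one hQ n v) (pow_nonneg hγ0 n)

theorem norm_sub_le_of_hasSum_geometric_smul_pow_apply {P Q : X →L[ℝ] X}
    (hP : ‖P‖ ≤ 1) (hQ : ‖Q‖ ≤ 1) {γ : ℝ} (hγ0 : 0 ≤ γ) (hγ1 : γ < 1) {v ρP ρQ : X}
    (hρP : HasSum (fun n : ℕ => γ ^ n • (P ^ n) v) ρP)
    (hρQ : HasSum (fun n : ℕ => γ ^ n • (Q ^ n) v) ρQ) :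
    ‖ρP - ρQ‖ ≤ γ / (1 - γ) ^ 2 * (‖P - Q‖ * ‖v‖) := by
  have hdiff : HasSum (fun n : ℕ => γ ^ n • (P ^ n - Q ^ n) v) (ρP - ρQ) := by
    simpa only [sub_apply, smul_sub] using hρP.sub hρQ
  have hmajorant : HasSum (fun n : ℕ => n * γ ^ n * (‖P - Q‖ * ‖v‖))
      (γ / (1 - γ) ^ 2 * (‖P - Q‖ * ‖v‖)) :=
    (hasSum_coe_mul_geometric_of_norm_lt_one (r := γ)
      (by rwa [Real.norm_of_nonneg hγ0])).mul_right _
  refine hdiff.norm_le_of_bounded hmajorant fun n => ?_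
  calc ‖γ ^ n • (P ^ n - Q ^ n) v‖ ≤ γ ^ n * (‖P ^ n - Q ^ n‖ * ‖v‖) := by
        rw [norm_smul, Real.norm_of_nonneg (pow_nonneg hγ0 n)]
        exact mul_le_mul_of_nonneg_left ((P ^ n - Q ^ n).le_opNorm v) (pow_nonneg hγ0 n)
    _ ≤ γ ^ n * (n * ‖P - Q‖ * ‖v‖) := by
        gcongr
        exact norm_pow_sub_pow_le_of_norm_le_one hP hQ n
    _ = n * γ ^ n * (‖P - Q‖ * ‖v‖) := by ring

end ContinuousLinearMap

theorem stmt_19_general {X : Type*} [NormedAddCommGroup X] [NormedSpace ℝ X] [CompleteSpace X]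
    (P Pstar : X →L[ℝ] X) (hP : ‖P‖ ≤ 1) (hPstar : ‖Pstar‖ ≤ 1)
    (γ : ℝ) (hγ0 : 0 ≤ γ) (hγ1 : γ < 1)
    (L κ : ℝ)
    (hLip : ‖Pstar - P‖ ≤ L * κ)
    (δ : X) (hδ : ‖δ‖ ≤ 1) :
    ∃ ρstar ρ : X,
      HasSum (fun t : ℕ => γ ^ t • (Pstar ^ t) δ) ρstar ∧
      HasSum (fun t : ℕ => γ ^ t • (P ^ t) δ) ρ ∧
      ‖ρstar - ρ‖ ≤ γ * L / (1 - γ) ^ 2 * κ := by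
  obtain ⟨ρstar, hρstar⟩ := ContinuousLinearMap.summable_geometric_smul_pow_apply hPstar hγ0 hγ1 δ
  obtain ⟨ρ, hρ⟩ := ContinuousLinearMap.summable_geometric_smul_pow_apply hP hγ0 hγ1 δ
  refine ⟨ρstar, ρ, hρstar, hρ, ?_⟩
  calc ‖ρstar - ρ‖ ≤ γ / (1 - γ) ^ 2 * (‖Pstar - P‖ * ‖δ‖) :=
        ContinuousLinearMap.norm_sub_le_of_hasSum_geometric_smul_pow_apply
          hPstar hP hγ0 hγ1 hρstar hρ
    _ ≤ γ / (1 - γ) ^ 2 * (L * κ * 1) := by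
        gcongr
        exact (norm_nonneg _).trans hLip
    _ = γ * L / (1 - γ) ^ 2 * κ := by ring

theorem stmt_19 {X : Type*} [NormedAddCommGroup X] [NormedSpace ℝ X] [CompleteSpace X]
    (P Pstar : X →L[ℝ] X) (hP : ‖P‖ ≤ 1) (hPstar : ‖Pstar‖ ≤ 1)
    (γ : ℝ) (hγ0 : 0 ≤ γ) (hγ1 : γ < 1)
    (L κ : ℝ) (hL : 0 ≤ L) (hκ : 0 ≤ κ)
    (hLip : ‖Pstar - P‖ ≤ L * κ)
    (δ : X) (hδ : ‖δ‖ ≤ 1) :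
    ∃ ρstar ρ : X,
      HasSum (fun t : ℕ => γ ^ t • (Pstar ^ t) δ) ρstar ∧
      HasSum (fun t : ℕ => γ ^ t • (P ^ t) δ) ρ ∧
      ‖ρstar - ρ‖ ≤ γ * L / (1 - γ) ^ 2 * κ :=
  stmt_19_general P Pstar hP hPstar γ hγ0 hγ1 L κ hLip δ hδ
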